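/- arXiv:1905.11692 — 3 statements merged into one kernel-verified Lean document; each statement's English description precedes it below -/
import Mathlib

section
/- Let A be symmetric positive definite, X ∈ ℝ^{n×k} of full column rank, 𝟙 the all-ones vector. Define f_{D1} := 1/(2·𝟙^⊤(X^⊤AX)^{-1}𝟙) and f_R := (𝟙^⊤(X^⊤A^2X)^{-1}X^⊤AX(X^⊤A^2X)^{-1}𝟙)/(2(𝟙^⊤(X^⊤A^2X)^{-1}𝟙)^2). Then f_R ≥ f_{D1}. -/
open Matrix

lemma aux_mulVec_inj {n k : ℕ} (X : Matrix (Fin n) (Fin k) ℝ) (hX : X.rank = k) :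
    Function.Injective X.mulVec := by
  rw [show X.mulVec = X.mulVecLin from rfl, ← LinearMap.ker_eq_bot]
  have h := X.mulVecLin.finrank_range_add_finrank_ker
  rw [show Module.finrank ℝ (LinearMap.range X.mulVecLin) = X.rank from rfl, hX] at h
  simp only [Module.finrank_pi, Fintype.card_fin] at h
  have : Module.finrank ℝ (LinearMap.ker X.mulVecLin) = 0 := by omega
  exact Submodule.finrank_eq_zero.mp this

lemma aux_conj_posdef {n k : ℕ} {M : Matrix (Fin n) (Fin n) ℝ} (hM : M.PosDef)
    (X : Matrix (Fin n) (Fin k) ℝ) (hX : Function.Injective X.mulVec) :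
    (Xᵀ * M * X).PosDef := by
  rw [posDef_iff_dotProduct_mulVec]
  constructor
  · have h := isHermitian_conjTranspose_mul_mul X hM.1
    simpa using h
  · intro x hx
    have hXx : X *ᵥ x ≠ 0 := fun h => hx (by simpa using hX (h.trans (X.mulVec_zero).symm))
    have := hM.dotProduct_mulVec_pos hXx
    simpa [← mulVec_mulVec, dotProduct_mulVec, vecMul_transpose, Matrix.dotProduct_mulVec]
      using this

lemma aux_sq_posdef {n : ℕ} {A : Matrix (Fin n) (Fin n) ℝ} (hA : A.PosDef) :
    (A * A).PosDef := by
  have hAt : Aᵀ = A := by exact (by simpa using hA.1 : A.IsSymm).eq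
  have h := aux_conj_posdef (M := (1 : Matrix (Fin n) (Fin n) ℝ)) Matrix.PosDef.one A
    (Matrix.mulVec_injective_iff_isUnit.mpr hA.isUnit)
  rw [Matrix.mul_one, hAt] at h
  exact h

theorem fR_ge_fD1
    {n k : ℕ} (A : Matrix (Fin n) (Fin n) ℝ) (X : Matrix (Fin n) (Fin k) ℝ)
    (hA : A.PosDef) (hX : X.rank = k) :
    ((1 : Fin k → ℝ) ⬝ᵥ
        ((Xᵀ * (A * A) * X)⁻¹ * (Xᵀ * A * X) * (Xᵀ * (A * A) * X)⁻¹) *ᵥ 1) /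
      (2 * ((1 : Fin k → ℝ) ⬝ᵥ ((Xᵀ * (A * A) * X)⁻¹ *ᵥ 1)) ^ 2) ≥
    1 / (2 * ((1 : Fin k → ℝ) ⬝ᵥ ((Xᵀ * A * X)⁻¹ *ᵥ 1))) := by
  rcases Nat.eq_zero_or_pos k with hk | hk
  · subst hk
    simp [dotProduct]
  have hone : (1 : Fin k → ℝ) ≠ 0 := by
    intro h
    have := congrFun h ⟨0, hk⟩
    norm_num at this
  have hinj := aux_mulVec_inj X hX
  have hB : (Xᵀ * A * X).PosDef := aux_conj_posdef hA X hinj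
  have hC : (Xᵀ * (A * A) * X).PosDef := aux_conj_posdef (aux_sq_posdef hA) X hinj
  set B := Xᵀ * A * X with hBdef
  set C := Xᵀ * (A * A) * X with hCdef
  have hCinv : C⁻¹.PosDef := hC.inv
  have hBinv : B⁻¹.PosDef := hB.inv
  have hBsym : Bᵀ = B := by exact (by simpa using hB.1 : B.IsSymm).eq
  have hCisym : C⁻¹ᵀ = C⁻¹ := by exact (by simpa using hCinv.1 : C⁻¹.IsSymm).eq
  set u : Fin k → ℝ := C⁻¹ *ᵥ 1 with hu
  set v : Fin k → ℝ := B⁻¹ *ᵥ 1 with hv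
  have hBv : B *ᵥ v = 1 := by
    rw [hv, mulVec_mulVec, Matrix.mul_nonsing_inv _ (isUnit_iff_isUnit_det _ |>.mp hB.isUnit),
      one_mulVec]
  -- positivity of scalars
  have ht : 0 < (1 : Fin k → ℝ) ⬝ᵥ u := by
    have := hCinv.dotProduct_mulVec_pos hone
    simpa using this
  have hs : 0 < (1 : Fin k → ℝ) ⬝ᵥ v := by
    have := hBinv.dotProduct_mulVec_pos hone
    simpa using this
  have hq : 0 < u ⬝ᵥ (B *ᵥ u) := by
    have hu0 : u ≠ 0 := by
      intro h
      rw [h] at ht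
      simp at ht
    have := hB.dotProduct_mulVec_pos hu0
    simpa using this
  set t := (1 : Fin k → ℝ) ⬝ᵥ u
  set s := (1 : Fin k → ℝ) ⬝ᵥ v
  set q := u ⬝ᵥ (B *ᵥ u)
  -- rewrite LHS numerator as q
  have hvm : (1 : Fin k → ℝ) ᵥ* C⁻¹ = u := by rw [← hCisym, vecMul_transpose]
  have hnum : (1 : Fin k → ℝ) ⬝ᵥ (C⁻¹ * B * C⁻¹) *ᵥ 1 = q := by
    rw [← mulVec_mulVec, ← mulVec_mulVec, dotProduct_mulVec, hvm]
  -- Cauchy-Schwarz: t^2 ≤ q * s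
  have key : t ^ 2 ≤ q * s := by
    have hexp : ∀ c : ℝ, 0 ≤ q - 2 * c * t + c ^ 2 * s := by
      intro c
      have hps : 0 ≤ (u - c • v) ⬝ᵥ (B *ᵥ (u - c • v)) := by
        rcases eq_or_ne (u - c • v) 0 with h | h
        · simp [h]
        · exact le_of_lt (by simpa using hB.dotProduct_mulVec_pos h)
      have e1 : v ⬝ᵥ (B *ᵥ u) = t := by
        rw [dotProduct_mulVec, ← mulVec_transpose, hBsym, hBv]
      have e2 : u ⬝ᵥ (B *ᵥ v) = t := by
        rw [hBv, dotProduct_comm]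
      have e3 : v ⬝ᵥ (B *ᵥ v) = s := by
        rw [hBv, dotProduct_comm]
      have expand : (u - c • v) ⬝ᵥ (B *ᵥ (u - c • v)) = q - 2 * c * t + c ^ 2 * s := by
        simp only [mulVec_sub, mulVec_smul, sub_dotProduct, dotProduct_sub, smul_dotProduct,
          dotProduct_smul, smul_eq_mul, e1, e2, e3]
        ring
      linarith [hps, expand ▸ hps]
    have h := hexp (t / s)
    have hs' : s ≠ 0 := ne_of_gt hs
    have : 0 ≤ q - t ^ 2 / s := by
      have : 2 * (t / s) * t = 2 * t ^ 2 / s := by ring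
      have h2 : (t / s) ^ 2 * s = t ^ 2 / s := by
        field_simp
      calc 0 ≤ q - 2 * (t / s) * t + (t / s) ^ 2 * s := h
        _ = q - t ^ 2 / s := by rw [this, h2]; ring
    have := (div_le_iff₀ hs).mp (by linarith : t ^ 2 / s ≤ q)
    linarith [this]
  rw [ge_iff_le, div_le_div_iff₀ (by positivity) (by positivity), hnum]
  nlinarith [key, hs, ht, hq]
end

section
/- Let A be symmetric positive definite, X ∈ ℝ^{n×k} of full column rank, 𝟙 the all-ones vector, z := ((AX)^†)^⊤𝟙 and y := ((A^{1/2}X)^†)^⊤𝟙. With f_{D1} and f_R as in the quadratic extrapolation setup, f_R/f_{D1} = (‖z‖_{A^{-1}}^2 · ‖y‖^2)/‖z‖^4, i.e. 2f_{D1} = 1/‖y‖^2 and 2f_R = ‖z‖_{A^{-1}}^2/‖z‖^4. -/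
open Matrix

/-- Moore–Penrose pseudoinverse of a full column rank matrix. -/
noncomputable def pinv {n k : ℕ} (B : Matrix (Fin n) (Fin k) ℝ) :
    Matrix (Fin k) (Fin n) ℝ := (Bᵀ * B)⁻¹ * Bᵀ

lemma two_div_aux (a t : ℝ) : 2 * (a / (2 * t)) = a / t := by
  rw [div_eq_mul_inv, mul_inv, div_eq_mul_inv]; ring

lemma dot_mulVec_mulVec {n m : ℕ} (P Q : Matrix (Fin n) (Fin m) ℝ) (u v : Fin m → ℝ) :
    (P *ᵥ u) ⬝ᵥ (Q *ᵥ v) = u ⬝ᵥ ((Pᵀ * Q) *ᵥ v) := by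
  rw [← vecMul_transpose, dotProduct_mulVec, vecMul_vecMul, ← dotProduct_mulVec]

lemma injective_of_rank {n k : ℕ} (X : Matrix (Fin n) (Fin k) ℝ) (hX : X.rank = k) :
    ∀ v, X *ᵥ v = 0 → v = 0 := by
  have h : LinearMap.ker X.mulVecLin = ⊥ := by
    have h1 := LinearMap.finrank_range_add_finrank_ker X.mulVecLin
    rw [Matrix.rank] at hX
    rw [hX] at h1
    simp only [Module.finrank_pi, Fintype.card_fin] at h1
    have : Module.finrank ℝ (LinearMap.ker X.mulVecLin) = 0 := by omega
    exact Submodule.finrank_eq_zero.mp this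
  intro v hv
  exact (LinearMap.ker_eq_bot.mp h) (by simpa using hv)

lemma posdef_conj {n k : ℕ} (B : Matrix (Fin n) (Fin n) ℝ) (X : Matrix (Fin n) (Fin k) ℝ)
    (hB : B.PosDef) (hinj : ∀ v, X *ᵥ v = 0 → v = 0) : (Xᵀ * B * X).PosDef := by
  refine Matrix.PosDef.of_dotProduct_mulVec_pos ?_ ?_
  · have := isHermitian_conjTranspose_mul_mul X hB.1
    simpa using this
  · intro x hx
    have hXx : X *ᵥ x ≠ 0 := fun h => hx (hinj x h)
    simpa only [star_mulVec, dotProduct_mulVec, vecMul_vecMul, conjTranspose_eq_transpose_of_trivial] using hB.dotProduct_mulVec_pos hXx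

theorem fR_fD1_ratio
    {n k : ℕ} (A S : Matrix (Fin n) (Fin n) ℝ) (X : Matrix (Fin n) (Fin k) ℝ)
    (hA : A.PosDef) (hS : S.PosDef) (hSA : S * S = A)
    (hX : X.rank = k)
    (z y : Fin n → ℝ)
    (hz : z = (pinv (A * X))ᵀ *ᵥ 1) (hy : y = (pinv (S * X))ᵀ *ᵥ 1) :
    2 * (1 / (2 * ((1 : Fin k → ℝ) ⬝ᵥ ((Xᵀ * A * X)⁻¹ *ᵥ 1)))) = 1 / (y ⬝ᵥ y) ∧
    2 * (((1 : Fin k → ℝ) ⬝ᵥ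
          ((Xᵀ * (A * A) * X)⁻¹ * (Xᵀ * A * X) * (Xᵀ * (A * A) * X)⁻¹) *ᵥ 1) /
        (2 * ((1 : Fin k → ℝ) ⬝ᵥ ((Xᵀ * (A * A) * X)⁻¹ *ᵥ 1)) ^ 2)) =
      (z ⬝ᵥ A⁻¹ *ᵥ z) / (z ⬝ᵥ z) ^ 2 := by
  have hinj := injective_of_rank X hX
  have hAs : Aᵀ = A := hA.1
  have hSs : Sᵀ = S := hS.1
  have hApd : IsUnit A.det := isUnit_iff_ne_zero.mpr hA.det_pos.ne'
  have hinjA : ∀ v, A *ᵥ v = 0 → v = 0 := by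
    intro v hv
    have h2 : A⁻¹ *ᵥ (A *ᵥ v) = v := by
      rw [mulVec_mulVec, Matrix.nonsing_inv_mul A hApd, one_mulVec]
    rw [hv, mulVec_zero] at h2; exact h2.symm
  have hMpd : (Xᵀ * A * X).PosDef := posdef_conj A X hA hinj
  have hAApd : (A * A).PosDef := by
    have : (Aᵀ * 1 * A).PosDef := posdef_conj 1 A Matrix.PosDef.one hinjA
    simpa [hAs] using this
  have hNpd : (Xᵀ * (A * A) * X).PosDef := posdef_conj (A * A) X hAApd hinj
  have hMu : IsUnit (Xᵀ * A * X).det := isUnit_iff_ne_zero.mpr hMpd.det_pos.ne'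
  have hNu : IsUnit (Xᵀ * (A * A) * X).det := isUnit_iff_ne_zero.mpr hNpd.det_pos.ne'
  have hMT : ((Xᵀ * A * X)⁻¹)ᵀ = (Xᵀ * A * X)⁻¹ := by
    rw [transpose_nonsing_inv]
    congr 1
    exact hMpd.1
  have hNT : ((Xᵀ * (A * A) * X)⁻¹)ᵀ = (Xᵀ * (A * A) * X)⁻¹ := by
    rw [transpose_nonsing_inv]
    congr 1
    exact hNpd.1
  have hSX : (S * X)ᵀ * (S * X) = Xᵀ * A * X := by
    rw [transpose_mul, hSs, Matrix.mul_assoc, ← Matrix.mul_assoc S S X, hSA, Matrix.mul_assoc]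
  have hAX : (A * X)ᵀ * (A * X) = Xᵀ * (A * A) * X := by
    rw [transpose_mul, hAs, Matrix.mul_assoc, Matrix.mul_assoc, Matrix.mul_assoc]
  have hy' : y = (S * X * (Xᵀ * A * X)⁻¹) *ᵥ 1 := by
    rw [hy, pinv, hSX, transpose_mul, transpose_transpose, hMT]
  have hz' : z = (A * X * (Xᵀ * (A * A) * X)⁻¹) *ᵥ 1 := by
    rw [hz, pinv, hAX, transpose_mul, transpose_transpose, hNT]
  have keyM : (S * X * (Xᵀ * A * X)⁻¹)ᵀ * (S * X * (Xᵀ * A * X)⁻¹) = (Xᵀ * A * X)⁻¹ := by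
    rw [transpose_mul, hMT]
    calc (Xᵀ * A * X)⁻¹ * (S * X)ᵀ * (S * X * (Xᵀ * A * X)⁻¹)
        = (Xᵀ * A * X)⁻¹ * ((S * X)ᵀ * (S * X)) * (Xᵀ * A * X)⁻¹ := by
          simp [Matrix.mul_assoc]
      _ = (Xᵀ * A * X)⁻¹ := by
          rw [hSX, Matrix.nonsing_inv_mul _ hMu, Matrix.one_mul]
  have keyN : (A * X * (Xᵀ * (A * A) * X)⁻¹)ᵀ * (A * X * (Xᵀ * (A * A) * X)⁻¹)
      = (Xᵀ * (A * A) * X)⁻¹ := by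
    rw [transpose_mul, hNT]
    calc (Xᵀ * (A * A) * X)⁻¹ * (A * X)ᵀ * (A * X * (Xᵀ * (A * A) * X)⁻¹)
        = (Xᵀ * (A * A) * X)⁻¹ * ((A * X)ᵀ * (A * X)) * (Xᵀ * (A * A) * X)⁻¹ := by
          simp [Matrix.mul_assoc]
      _ = (Xᵀ * (A * A) * X)⁻¹ := by
          rw [hAX, Matrix.nonsing_inv_mul _ hNu, Matrix.one_mul]
  have keyR : (A * X * (Xᵀ * (A * A) * X)⁻¹)ᵀ * (A⁻¹ * (A * X * (Xᵀ * (A * A) * X)⁻¹))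
      = (Xᵀ * (A * A) * X)⁻¹ * (Xᵀ * A * X) * (Xᵀ * (A * A) * X)⁻¹ := by
    rw [transpose_mul, hNT, transpose_mul, hAs]
    have hAiA : A * (A⁻¹ * A) = A := by
      rw [Matrix.mul_nonsing_inv_cancel_left _ _ hApd]
    calc (Xᵀ * (A * A) * X)⁻¹ * (Xᵀ * A) * (A⁻¹ * (A * X * (Xᵀ * (A * A) * X)⁻¹))
        = (Xᵀ * (A * A) * X)⁻¹ * (Xᵀ * (A * (A⁻¹ * A)) * X) * (Xᵀ * (A * A) * X)⁻¹ := by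
          simp [Matrix.mul_assoc]
      _ = (Xᵀ * (A * A) * X)⁻¹ * (Xᵀ * A * X) * (Xᵀ * (A * A) * X)⁻¹ := by
          rw [hAiA, Matrix.mul_assoc Xᵀ A X]
  have hyy : y ⬝ᵥ y = (1 : Fin k → ℝ) ⬝ᵥ ((Xᵀ * A * X)⁻¹ *ᵥ 1) := by
    rw [hy', dot_mulVec_mulVec, keyM]
  have hzz : z ⬝ᵥ z = (1 : Fin k → ℝ) ⬝ᵥ ((Xᵀ * (A * A) * X)⁻¹ *ᵥ 1) := by
    rw [hz', dot_mulVec_mulVec, keyN]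
  have hzAz : z ⬝ᵥ A⁻¹ *ᵥ z =
      (1 : Fin k → ℝ) ⬝ᵥ
        (((Xᵀ * (A * A) * X)⁻¹ * (Xᵀ * A * X) * (Xᵀ * (A * A) * X)⁻¹) *ᵥ 1) := by
    rw [hz', mulVec_mulVec, dot_mulVec_mulVec, keyR]
  exact ⟨by rw [hyy, two_div_aux], by rw [hzz, hzAz, two_div_aux]⟩
end

section
/- Let f be quadratic with symmetric Hessian A, gradient descent iterates giving X = [x_0,...,x_K] and R̃ with columns ∇f(x_i) = (x_i − x_{i+1})/α_i. If X^⊤R̃ is invertible, then c = ((X^⊤R̃)^{-1}𝟙)/(𝟙^⊤(X^⊤R̃)^{-1}𝟙) satisfies the KKT conditions of minimizing f(Xc) subject to 𝟙^⊤c = 1, i.e. there exists λ ∈ ℝ with X^⊤∇f(Xc) + λ𝟙 = 0 and 𝟙^⊤c = 1. -/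
open Matrix

theorem DNA1_coefficients_satisfy_KKT
    {n K : ℕ} (A : Matrix (Fin n) (Fin n) ℝ) (hA : A.IsSymm)
    (b : Fin n → ℝ) (γ : ℝ)
    (x : Fin (K + 2) → Fin n → ℝ) (α : Fin (K + 1) → ℝ)
    (hα : ∀ i, 0 < α i)
    (hGD : ∀ i : Fin (K + 1), x i.succ = x i.castSucc - α i • (A *ᵥ x i.castSucc + b))
    (X Rt : Matrix (Fin n) (Fin (K + 1)) ℝ)
    (hX : X = Matrix.of fun j i => x i.castSucc j)
    (hRt : Rt = Matrix.of fun j i => (x i.castSucc j - x i.succ j) / α i)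
    (hinv : IsUnit (Xᵀ * Rt))
    (hδ : (1 : Fin (K + 1) → ℝ) ⬝ᵥ ((Xᵀ * Rt)⁻¹ *ᵥ 1) ≠ 0)
    (c : Fin (K + 1) → ℝ)
    (hc : c = ((1 : Fin (K + 1) → ℝ) ⬝ᵥ ((Xᵀ * Rt)⁻¹ *ᵥ 1))⁻¹ • ((Xᵀ * Rt)⁻¹ *ᵥ 1)) :
    ∃ lam : ℝ, Xᵀ *ᵥ (A *ᵥ (X *ᵥ c) + b) + lam • (1 : Fin (K + 1) → ℝ) = 0 ∧
      (1 : Fin (K + 1) → ℝ) ⬝ᵥ c = 1 := by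
  set M := Xᵀ * Rt with hM
  set δ := (1 : Fin (K + 1) → ℝ) ⬝ᵥ (M⁻¹ *ᵥ 1) with hd
  -- Rt columns are gradients
  have hRtcol : ∀ j i, Rt j i = (A *ᵥ x i.castSucc + b) j := by
    intro j i
    have h := congrFun (hGD i) j
    simp only [Pi.sub_apply, Pi.smul_apply, smul_eq_mul] at h
    rw [hRt]
    simp only [Matrix.of_apply]
    rw [h]
    rw [sub_sub_cancel, Pi.add_apply]
    exact mul_div_cancel_left₀ _ (hα i).ne'
  have h1c : (1 : Fin (K + 1) → ℝ) ⬝ᵥ c = 1 := by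
    rw [hc, dotProduct_smul, smul_eq_mul, ← hd]
    exact inv_mul_cancel₀ hδ
  -- A *ᵥ (X *ᵥ c) + b = Rt *ᵥ c
  have hkey : A *ᵥ (X *ᵥ c) + b = Rt *ᵥ c := by
    funext j
    have : (Rt *ᵥ c) j = ∑ i, ((A *ᵥ (fun k => X k i)) j + b j) * c i := by
      simp only [mulVec, dotProduct]
      refine Finset.sum_congr rfl fun i _ => ?_
      rw [hRtcol j i]
      simp [hX, mulVec, dotProduct, Pi.add_apply]
    rw [this]
    simp only [Pi.add_apply, mulVec, dotProduct]
    rw [Finset.sum_congr rfl (fun i _ => add_mul _ _ _), Finset.sum_add_distrib]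
    congr 1
    · simp only [Finset.mul_sum, Finset.sum_mul]
      rw [Finset.sum_comm]
      exact Finset.sum_congr rfl fun i _ => Finset.sum_congr rfl fun k _ => by ring
    · rw [← Finset.mul_sum]
      have : ∑ i, c i = (1 : Fin (K + 1) → ℝ) ⬝ᵥ c := by
        simp [dotProduct]
      rw [this, h1c, mul_one]
  have hMMinv : M * M⁻¹ = 1 := mul_nonsing_inv M ((isUnit_iff_isUnit_det M).mp hinv)
  have hMc : M *ᵥ c = δ⁻¹ • (1 : Fin (K + 1) → ℝ) := by
    rw [hc, mulVec_smul, mulVec_mulVec, hMMinv, one_mulVec]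
  refine ⟨-δ⁻¹, ?_, h1c⟩
  rw [hkey, mulVec_mulVec, ← hM, hMc]
  simp
end
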